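/- Let N, K be positive integers, ε > 0, β > 0, σ > 0, and Ω > 4εN. If φ ∈ ℓ²(ℤ^N_K), φ ≠ 0, satisfies −ε(Δ_d φ)_n + β |φ_n|^{2σ} φ_n = Ω φ_n for all n with ‖n‖_∞ ≤ K (where φ_n = 0 for ‖n‖_∞ > K), then its power R² = Σ_{‖n‖_∞ ≤ K} |φ_n|² satisfies R^{2σ} ≥ (Ω − 4Nε)/β, i.e. [ (Ω − 4Nε)/β ]^{1/σ} ≤ R². -/

import Mathlib

open scoped BigOperators
noncomputable section

/-- The lattice `ℤ^N`. -/
abbrev Zn (N : ℕ) := Fin N → ℤ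

/-- The ν-th standard basis vector of `ℤ^N`. -/
def evec {N : ℕ} (ν : Fin N) : Zn N := fun i => if i = ν then 1 else 0

/-- The discrete Laplacian on `ℤ^N`. -/
def dLap {N : ℕ} (φ : Zn N → ℂ) : Zn N → ℂ :=
  fun n => ∑ ν : Fin N, (φ (n + evec ν) + φ (n - evec ν) - 2 * φ n)

/-- The forward difference operator in direction ν. -/
def fdiff {N : ℕ} (ν : Fin N) (φ : Zn N → ℂ) : Zn N → ℂ :=
  fun n => φ (n + evec ν) - φ n

/-- `n` lies in the box `‖n‖_∞ ≤ K`. -/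
def inBox {N : ℕ} (K : ℕ) (n : Zn N) : Prop := ∀ i, |n i| ≤ (K : ℤ)

/-- `φ` is supported in the box `‖n‖_∞ ≤ K` (i.e. `φ ∈ ℓ²(ℤ^N_K)`). -/
def suppIn {N : ℕ} (K : ℕ) (φ : Zn N → ℂ) : Prop := ∀ n, ¬ inBox K n → φ n = 0

/-! Multiplying the stationary equation by `conj φₙ` and summing over the box gives
`ε ⟨-Δφ, φ⟩ + β ∑ |φₙ|^(2σ+2) = Ω R²`. By Young's inequality and the shift invariance of the
`ℓ²` norm, `⟨-Δφ, φ⟩ ≤ 4N R²`, and since every `|φₙ|² ≤ R²`, `∑ |φₙ|^(2σ+2) ≤ R^(2σ) R²`.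
Hence `(Ω - 4Nε) R² ≤ β R^(2σ) R²`, and `R² > 0` because `φ ≠ 0`. -/

open ComplexConjugate

lemma Finset.sum_comp_add_le_of_support_subset {G : Type*} [AddGroup G] {B : Finset G}
    {f : G → ℝ} (hf : ∀ m ∉ B, f m = 0) (hnn : 0 ≤ f) (c : G) :
    ∑ n ∈ B, f (n + c) ≤ ∑ n ∈ B, f n := by
  have hs : Summable f := summable_of_ne_finset_zero hf
  calc ∑ n ∈ B, f (n + c) ≤ ∑' n, f (n + c) :=
        ((Equiv.addRight c).summable_iff.2 hs).sum_le_tsum B fun n _ => hnn _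
    _ = ∑' n, f n := (Equiv.addRight c).tsum_eq f
    _ = ∑ n ∈ B, f n := tsum_eq_sum hf

lemma re_neg_second_diff_mul_conj_le (a b c : ℂ) :
    (-((a + b - 2 * c) * conj c)).re ≤ 3 * ‖c‖ ^ 2 + ‖a‖ ^ 2 / 2 + ‖b‖ ^ 2 / 2 := by
  have hcross : ∀ z : ℂ, -(z * conj c).re ≤ ‖z‖ * ‖c‖ := fun z => by
    simpa [norm_mul] using Complex.re_le_norm (-(z * conj c))
  have hexpand : (-((a + b - 2 * c) * conj c)).re
      = -(a * conj c).re - (b * conj c).re + 2 * ‖c‖ ^ 2 := by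
    simp only [sub_mul, add_mul, mul_assoc, Complex.mul_conj', Complex.neg_re, Complex.sub_re,
      Complex.add_re]
    norm_cast
    ring
  nlinarith [hcross a, hcross b, sq_nonneg (‖a‖ - ‖c‖), sq_nonneg (‖b‖ - ‖c‖)]

lemma Real.sum_rpow_mul_le {ι : Type*} (s : Finset ι) {x : ι → ℝ} (hx : ∀ i ∈ s, 0 ≤ x i)
    {σ : ℝ} (hσ : 0 ≤ σ) :
    ∑ i ∈ s, x i ^ σ * x i ≤ (∑ i ∈ s, x i) ^ σ * ∑ i ∈ s, x i := by
  rw [Finset.mul_sum]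
  refine Finset.sum_le_sum fun i hi => mul_le_mul_of_nonneg_right ?_ (hx i hi)
  exact Real.rpow_le_rpow (hx i hi) (Finset.single_le_sum hx hi) hσ

lemma sum_re_neg_dLap_mul_conj_le {N : ℕ} {B : Finset (Zn N)} {φ : Zn N → ℂ}
    (hφ : ∀ n ∉ B, φ n = 0) :
    ∑ n ∈ B, (-(dLap φ n * conj (φ n))).re ≤ 4 * N * ∑ n ∈ B, ‖φ n‖ ^ 2 := by
  set P := ∑ n ∈ B, ‖φ n‖ ^ 2
  have hshift (c : Zn N) : ∑ n ∈ B, ‖φ (n + c)‖ ^ 2 ≤ P :=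
    Finset.sum_comp_add_le_of_support_subset (f := fun m => ‖φ m‖ ^ 2)
      (by simp +contextual [hφ]) (fun _ => sq_nonneg _) c
  calc ∑ n ∈ B, (-(dLap φ n * conj (φ n))).re
      = ∑ ν : Fin N, ∑ n ∈ B,
          (-((φ (n + evec ν) + φ (n - evec ν) - 2 * φ n) * conj (φ n))).re := by
        simp only [dLap, Finset.sum_mul, ← Finset.sum_neg_distrib, Complex.re_sum]
        exact Finset.sum_comm
    _ ≤ ∑ ν : Fin N, ∑ n ∈ B,
          (3 * ‖φ n‖ ^ 2 + ‖φ (n + evec ν)‖ ^ 2 / 2 + ‖φ (n - evec ν)‖ ^ 2 / 2) := by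
        gcongr
        exact re_neg_second_diff_mul_conj_le _ _ _
    _ ≤ ∑ ν : Fin N, 4 * P := by
        gcongr with ν
        simp only [Finset.sum_add_distrib, ← Finset.mul_sum, ← Finset.sum_div]
        have hminus := hshift (-evec ν)
        simp only [← sub_eq_add_neg] at hminus
        linarith [hshift (evec ν)]
    _ = 4 * N * P := by simp [mul_comm, mul_assoc]

def box (N K : ℕ) : Finset (Zn N) := Finset.Icc (fun _ => -(K : ℤ)) (fun _ => (K : ℤ))

lemma mem_box {N K : ℕ} {n : Zn N} : n ∈ box N K ↔ inBox K n := by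
  simp [box, Pi.le_def, inBox, abs_le, forall_and]

lemma Complex.re_neg_mul_conj_of_stationary {L x : ℂ} {ε β Ω r : ℝ}
    (h : -(ε : ℂ) * L + (β : ℂ) * (r : ℂ) * x = Ω * x) :
    ε * (-(L * conj x)).re + β * (r * ‖x‖ ^ 2) = Ω * ‖x‖ ^ 2 := by
  have h' := congrArg (fun z => (z * conj x).re) h
  simp only [add_mul, neg_mul, mul_assoc, Complex.mul_conj', ← Complex.ofReal_pow,
    ← Complex.ofReal_mul, Complex.add_re, Complex.neg_re, Complex.re_ofReal_mul,
    Complex.ofReal_re] at h'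
  rw [Complex.neg_re]
  linarith

theorem power_lower_bound_defocusing_general {N K : ℕ}
    (ε β σ Ω : ℝ) (hε : 0 < ε) (hβ : 0 < β) (hσ : 0 < σ)
    (hΩ : 4 * ε * N < Ω)
    (φ : Zn N → ℂ) (hsupp : suppIn K φ) (hne : φ ≠ 0)
    (heq : ∀ n : Zn N, inBox K n →
      -(ε : ℂ) * dLap φ n + (β : ℂ) * ((‖φ n‖ ^ (2 * σ) : ℝ) : ℂ) * φ n
        = (Ω : ℂ) * φ n) :
    (Ω - 4 * N * ε) / β ≤ (∑' n, ‖φ n‖ ^ 2) ^ σ ∧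
    ((Ω - 4 * N * ε) / β) ^ (1 / σ) ≤ ∑' n, ‖φ n‖ ^ 2 := by
  have hφ : ∀ n ∉ box N K, φ n = 0 := fun n hn => hsupp n (mt mem_box.2 hn)
  set P := ∑ n ∈ box N K, ‖φ n‖ ^ 2
  have hP : ∑' n, ‖φ n‖ ^ 2 = P := tsum_eq_sum (by simp +contextual [hφ])
  have hPpos : 0 < P := by
    obtain ⟨m, hm⟩ := Function.ne_iff.mp hne
    exact Finset.sum_pos' (fun _ _ => sq_nonneg _)
      ⟨m, by_contra fun hmB => hm (hφ m hmB), by positivity⟩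
  have hbalance : ε * ∑ n ∈ box N K, (-(dLap φ n * conj (φ n))).re
      + β * ∑ n ∈ box N K, ‖φ n‖ ^ (2 * σ) * ‖φ n‖ ^ 2 = Ω * P := by
    simp only [P, Finset.mul_sum, ← Finset.sum_add_distrib]
    exact Finset.sum_congr rfl fun n hn =>
      Complex.re_neg_mul_conj_of_stationary (heq n (mem_box.1 hn))
  have hlin := sum_re_neg_dLap_mul_conj_le hφ
  have hnonlin : ∑ n ∈ box N K, ‖φ n‖ ^ (2 * σ) * ‖φ n‖ ^ 2 ≤ P ^ σ * P := by
    simpa only [← Real.rpow_natCast_mul (norm_nonneg _), Nat.cast_ofNat] using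
      Real.sum_rpow_mul_le (box N K) (fun n _ => sq_nonneg ‖φ n‖) hσ.le
  have hlower : (Ω - 4 * N * ε) / β ≤ P ^ σ := by
    rw [div_le_iff₀ hβ]
    refine le_of_mul_le_mul_right ?_ hPpos
    nlinarith [mul_le_mul_of_nonneg_left hlin hε.le, mul_le_mul_of_nonneg_left hnonlin hβ.le]
  have hgap : 0 ≤ (Ω - 4 * N * ε) / β := div_nonneg (by linarith) hβ.le
  rw [hP, one_div]
  exact ⟨hlower, (Real.rpow_inv_le_iff_of_pos hgap hPpos.le hσ).2 hlower⟩

/-- Lower bound on the power of nontrivial breather solutions of the defocusing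
DNLS with power nonlinearity on the finite lattice, for frequencies `Ω > 4εN`:
`R^{2σ} ≥ (Ω − 4Nε)/β`, i.e. `[(Ω − 4Nε)/β]^{1/σ} ≤ R²`. -/
theorem power_lower_bound_defocusing {N K : ℕ} (hN : 0 < N) (hK : 0 < K)
    (ε β σ Ω : ℝ) (hε : 0 < ε) (hβ : 0 < β) (hσ : 0 < σ)
    (hΩ : 4 * ε * N < Ω)
    (φ : Zn N → ℂ) (hsupp : suppIn K φ) (hne : φ ≠ 0)
    (heq : ∀ n : Zn N, inBox K n →
      -(ε : ℂ) * dLap φ n + (β : ℂ) * ((‖φ n‖ ^ (2 * σ) : ℝ) : ℂ) * φ n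
        = (Ω : ℂ) * φ n) :
    (Ω - 4 * N * ε) / β ≤ (∑' n, ‖φ n‖ ^ 2) ^ σ ∧
    ((Ω - 4 * N * ε) / β) ^ (1 / σ) ≤ ∑' n, ‖φ n‖ ^ 2 :=
  power_lower_bound_defocusing_general ε β σ Ω hε hβ hσ hΩ φ hsupp hne heq
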